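/- arXiv:2106.09143 — 5 statements merged into one kernel-verified Lean document; each statement's English description precedes it below -/
import Mathlib

section
/- The only solutions in positive integers p > q > 0 to the equation p² + q² − 6pq = 1 are the consecutive pairs (p,q) = (y_{i+1}, y_i) of the sequence defined by y_0 = 0, y_1 = 1, y_{k+1} = 6y_k − y_{k−1}. -/
def ySeq : ℕ → ℤ
  | 0 => 0
  | 1 => 1
  | (n + 2) => 6 * ySeq (n + 1) - ySeq n

lemma pell_aux (n : ℕ) : ∀ p q : ℤ, q.toNat = n → 0 < q → q < p →
    p ^ 2 + q ^ 2 - 6 * p * q = 1 → ∃ i : ℕ, p = ySeq (i + 1) ∧ q = ySeq i := by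
  induction n using Nat.strong_induction_on with
  | _ n ih =>
    intro p q hqn hq hpq h
    by_cases h1 : q = 1
    · have hp6 : p * (p - 6) = 0 := by nlinarith
      have hp : p = 6 := by
        rcases mul_eq_zero.mp hp6 with h' | h'
        · exfalso; rw [h1] at hpq; omega
        · omega
      exact ⟨1, by norm_num [hp, h1, ySeq]⟩
    · have hq2 : 2 ≤ q := by omega
      set q' := 6 * q - p with hq'def
      have hmul : q' * p = q ^ 2 - 1 := by linear_combination -h
      have hq'pos : 0 < q' := by nlinarith
      have hq'lt : q' < q := by nlinarith
      have hsol : q ^ 2 + q' ^ 2 - 6 * q * q' = 1 := by linear_combination h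
      have hlt : q'.toNat < n := by omega
      obtain ⟨i, hi1, hi2⟩ := ih q'.toNat hlt q q' rfl hq'pos hq'lt hsol
      refine ⟨i + 1, ?_, hi1⟩
      show p = ySeq (i + 2)
      rw [ySeq, ← hi1, ← hi2]
      omega

theorem solutions_of_pell_like (p q : ℤ) (hq : 0 < q) (hpq : q < p)
    (h : p ^ 2 + q ^ 2 - 6 * p * q = 1) :
    ∃ i : ℕ, p = ySeq (i + 1) ∧ q = ySeq i :=
  pell_aux q.toNat p q rfl hq hpq h
end

section
/- There do not exist positive integers p, q, t, d₊, m₊, d₋, m₋ such that 8d₊ = 3(p+q) + t, 8m₊ = (p+q) + 3t, 8d₋ = 3(p+q) − t, and 8m₋ = (p+q) − 3t all hold simultaneously with t² = p² − 6pq + q² + 8. -/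
theorem no_double_epsilon_solution :
    ¬ ∃ p q t dp mp dm mm : ℤ, 0 < p ∧ 0 < q ∧ 0 < t ∧ 0 < dp ∧ 0 < mp ∧ 0 < dm ∧ 0 < mm ∧
      t ^ 2 = p ^ 2 - 6 * p * q + q ^ 2 + 8 ∧
      8 * dp = 3 * (p + q) + t ∧ 8 * mp = (p + q) + 3 * t ∧
      8 * dm = 3 * (p + q) - t ∧ 8 * mm = (p + q) - 3 * t := by
  rintro ⟨p, q, t, dp, mp, dm, mm, hp, hq, ht, hdp, hmp, hdm, hmm, heq, e1, e2, e3, e4⟩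
  -- p + q = 4s, t = 4u
  obtain ⟨s, hs⟩ : ∃ s, p + q = 4 * s := ⟨3 * (dp + dm) - 2 * (p + q), by linarith⟩
  obtain ⟨u, hu⟩ : ∃ u, t = 4 * u := ⟨dp - dm, by linarith⟩
  have hdp2 : 2 * dp = 3 * s + u := by linarith
  -- pq = 2s² − 2u² + 1
  have hpq : p * q = 2 * s ^ 2 - 2 * u ^ 2 + 1 := by nlinarith [heq, hs, hu]
  -- s ≡ u mod 2
  obtain ⟨a, ha⟩ : ∃ a, s - u = 2 * a := ⟨2 * s - dp, by linarith⟩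
  obtain ⟨b, hb⟩ : ∃ b, s + u = 2 * b := ⟨dp - s, by linarith⟩
  have h1 : p * q = 8 * (a * b) + 1 := by nlinarith [ha, hb, hpq]
  -- p is odd
  have hpodd : ∃ c, p = 2 * c + 1 := by
    rcases Int.even_or_odd p with ⟨c, hc⟩ | ⟨c, hc⟩
    · exfalso
      have : p * q = 2 * (c * q) := by rw [hc]; ring
      obtain ⟨A, hA⟩ : ∃ A, a * b = A := ⟨_, rfl⟩
      obtain ⟨B, hB⟩ : ∃ B, c * q = B := ⟨_, rfl⟩
      rw [hA] at h1
      rw [hB] at this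
      omega
    · exact ⟨c, hc⟩
  obtain ⟨c, hc⟩ := hpodd
  have hq' : q = 4 * s - p := by linarith
  have key : 8 * (a * b) + 1 = 8 * (s * c) + 4 * s - 4 * (c * c) - 4 * c - 1 := by
    rw [← h1, hq', hc]; ring
  obtain ⟨A, hA⟩ : ∃ A, a * b = A := ⟨_, rfl⟩
  obtain ⟨B, hB⟩ : ∃ B, s * c = B := ⟨_, rfl⟩
  obtain ⟨C, hC⟩ : ∃ C, c * c = C := ⟨_, rfl⟩
  rw [hA, hB, hC] at key
  omega
end

section
/- A matrix A = [[a,b],[c,d]] in SL(2,ℤ) preserves the quadratic form p² − 6pq + q² (i.e. (ap+bq)² − 6(ap+bq)(cp+dq) + (cp+dq)² = p² − 6pq + q² for all p,q) if and only if c = −b and d = 6b + a. -/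
theorem sl2_preserves_form_iff (a b c d : ℤ) (hdet : a * d - b * c = 1) :
    (∀ p q : ℤ,
        (a * p + b * q) ^ 2 - 6 * (a * p + b * q) * (c * p + d * q) + (c * p + d * q) ^ 2
          = p ^ 2 - 6 * p * q + q ^ 2)
      ↔ (c = -b ∧ d = 6 * b + a) := by
  constructor
  · intro h
    have h1 := h 1 0
    have h2 := h 0 1
    have h3 := h 1 1
    have e3 : 2 * (a * b - 3 * a * d - 3 * b * c + c * d) = -6 := by
      linear_combination h3 - h1 - h2
    have hc2 : 2 * c = -(2 * b) := by
      linear_combination (-2 * b) * h1 + a * e3 + (6 * a - 2 * c) * hdet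
    have hc : c = -b := by omega
    have hd2 : 2 * (a - d - 6 * c) = 0 := by
      linear_combination (2 * d) * h1 - c * e3 - (2 * a - 6 * c) * hdet
    exact ⟨hc, by omega⟩
  · rintro ⟨rfl, rfl⟩ p q
    linear_combination (p ^ 2 - 6 * p * q + q ^ 2) * hdet
end

section
/- Suppose acc(b) = p/q for coprime positive integers p > q, where acc(b) is the root > 1 of z² − ((3−b)²/(1−b²) − 2)z + 1 = 0 with b ∈ [0,1). Then b = (3pq ± (p+q)√σ)/(p² + q² + 3pq) where σ = (p−3q)² − 8q². In particular b is rational if and only if σ is a perfect square. -/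
theorem acc_rational_iff (b : ℝ) (hb0 : 0 ≤ b) (hb1 : b < 1)
    (p q : ℤ) (hq : 0 < q) (hpq : q < p) (hcop : IsCoprime p q)
    (hacc : ((p : ℝ) / q) ^ 2 - ((3 - b) ^ 2 / (1 - b ^ 2) - 2) * ((p : ℝ) / q) + 1 = 0) :
    (b = (3 * p * q + (p + q) * Real.sqrt (((p - 3 * q) ^ 2 - 8 * q ^ 2 : ℤ) : ℝ))
          / ((p : ℝ) ^ 2 + q ^ 2 + 3 * p * q) ∨
     b = (3 * p * q - (p + q) * Real.sqrt (((p - 3 * q) ^ 2 - 8 * q ^ 2 : ℤ) : ℝ))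
          / ((p : ℝ) ^ 2 + q ^ 2 + 3 * p * q)) ∧
    ((∃ r : ℚ, (r : ℝ) = b) ↔ ∃ k : ℤ, 1 ≤ k ∧ k ^ 2 = (p - 3 * q) ^ 2 - 8 * q ^ 2) := by
  have hq0 : (0:ℝ) < (q:ℝ) := by exact_mod_cast hq
  have hp0 : (0:ℝ) < (p:ℝ) := by exact_mod_cast hq.trans hpq
  have hb2 : (0:ℝ) < 1 - b^2 := by nlinarith
  have h1 : (1:ℝ) - b^2 ≠ 0 := ne_of_gt hb2
  have h2 : (q:ℝ) ≠ 0 := ne_of_gt hq0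
  have hA : (0:ℝ) < (p:ℝ)^2 + q^2 + 3*p*q := by nlinarith
  have hAne : ((p:ℝ)^2 + q^2 + 3*p*q) ≠ 0 := ne_of_gt hA
  have hpq0 : (0:ℝ) < (p:ℝ) + q := by linarith
  -- polynomial equation for b
  have heq : ((p:ℝ)^2+q^2+3*p*q) * b^2 - 6*p*q*b + (9*p*q - ((p:ℝ)+q)^2) = 0 := by
    field_simp at hacc
    have heq' : (q:ℝ) * (((p:ℝ)^2+q^2+3*p*q) * b^2 - 6*p*q*b + (9*p*q - ((p:ℝ)+q)^2)) = 0 := by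
      linear_combination (-(q:ℝ)) * hacc
    exact (mul_eq_zero.mp heq').resolve_left h2
  have key : (((p:ℝ)^2+q^2+3*p*q) * b - 3*p*q)^2
      = ((p:ℝ)+q)^2 * (((p:ℝ)-3*q)^2 - 8*q^2) := by
    linear_combination ((p:ℝ)^2+q^2+3*p*q) * heq
  have hscast : ((((p - 3 * q) ^ 2 - 8 * q ^ 2 : ℤ) : ℝ)) = ((p:ℝ)-3*q)^2 - 8*(q:ℝ)^2 := by
    push_cast; ring
  have hs : (0:ℝ) ≤ ((p:ℝ)-3*q)^2 - 8*q^2 := by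
    nlinarith [sq_nonneg (((p:ℝ)^2+q^2+3*p*q) * b - 3*p*q), key, sq_nonneg ((p:ℝ)+q), hpq0]
  set S : ℝ := Real.sqrt (((p - 3 * q) ^ 2 - 8 * q ^ 2 : ℤ) : ℝ) with hS
  have hS2 : S ^ 2 = ((p:ℝ)-3*q)^2 - 8*q^2 := by
    rw [hS, Real.sq_sqrt]; · exact hscast
    · rw [hscast]; exact hs
  have hSnn : 0 ≤ S := Real.sqrt_nonneg _
  -- the disjunction
  have hdisj : b = (3 * p * q + ((p:ℝ) + q) * S) / ((p : ℝ) ^ 2 + q ^ 2 + 3 * p * q) ∨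
      b = (3 * p * q - ((p:ℝ) + q) * S) / ((p : ℝ) ^ 2 + q ^ 2 + 3 * p * q) := by
    have hfac : ((((p:ℝ)^2+q^2+3*p*q) * b - 3*p*q) - ((p:ℝ)+q) * S)
        * ((((p:ℝ)^2+q^2+3*p*q) * b - 3*p*q) + ((p:ℝ)+q) * S) = 0 := by
      linear_combination key - ((p:ℝ)+q)^2 * hS2
    rcases mul_eq_zero.mp hfac with h | h
    · left; field_simp; linarith
    · right; field_simp; linarith
  -- sigma ≠ 0
  have hσne : (p - 3*q)^2 - 8*q^2 ≠ 0 := by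
    intro h
    have h3 : ∀ a c : ZMod 3, (a - 3*c)^2 - 8*c^2 = 0 → a = 0 ∧ c = 0 := by decide
    have hz : ((p : ZMod 3) - 3*q)^2 - 8*(q : ZMod 3)^2 = 0 := by
      have := congrArg (fun n : ℤ => (n : ZMod 3)) h
      push_cast at this
      convert this using 1
    obtain ⟨hp3, hq3⟩ := h3 _ _ hz
    have hdp : (3:ℤ) ∣ p := (ZMod.intCast_zmod_eq_zero_iff_dvd p 3).mp hp3
    have hdq : (3:ℤ) ∣ q := (ZMod.intCast_zmod_eq_zero_iff_dvd q 3).mp hq3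
    obtain ⟨u, v, huv⟩ := hcop
    have : (3:ℤ) ∣ 1 := by
      rw [← huv]
      exact dvd_add (Dvd.dvd.mul_left hdp u) (Dvd.dvd.mul_left hdq v)
    omega
  refine ⟨hdisj, ?_, ?_⟩
  · rintro ⟨r, hr⟩
    -- S is rational
    have hSrat : ∃ s : ℚ, (s : ℝ) = S := by
      rcases hdisj with h | h
      · refine ⟨((((p:ℚ)^2+q^2+3*p*q) * r - 3*p*q) / ((p:ℚ)+q)), ?_⟩
        have hpqQ : ((p:ℚ)+q) ≠ 0 := by
          have : (0:ℚ) < (p:ℚ)+q := by exact_mod_cast hpq0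
          exact ne_of_gt this
        push_cast
        rw [hr, h]
        field_simp
        ring
      · refine ⟨((3*p*q - ((p:ℚ)^2+q^2+3*p*q) * r) / ((p:ℚ)+q)), ?_⟩
        have hpqQ : ((p:ℚ)+q) ≠ 0 := by
          have : (0:ℚ) < (p:ℚ)+q := by exact_mod_cast hpq0
          exact ne_of_gt this
        push_cast
        rw [hr, h]
        field_simp
        ring
    obtain ⟨s, hsr⟩ := hSrat
    have hnotirr : ¬ Irrational S := by
      rw [hsr.symm]; exact Rat.not_irrational s
    have hex : ∃ y : ℤ, S = (y : ℝ) := by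
      by_contra hno
      exact hnotirr (irrational_nrt_of_notint_nrt 2 ((p - 3*q)^2 - 8*q^2)
        (by rw [hS2, hscast]) hno (by norm_num))
    obtain ⟨y, hy⟩ := hex
    have hynn : 0 ≤ y := by
      have : (0:ℝ) ≤ (y:ℝ) := hy ▸ hSnn
      exact_mod_cast this
    have hy2 : y^2 = (p - 3*q)^2 - 8*q^2 := by
      have : ((y:ℝ))^2 = ((p:ℝ)-3*q)^2 - 8*q^2 := by rw [← hy]; exact hS2
      exact_mod_cast (by push_cast; linarith [this] : ((y^2 : ℤ) : ℝ) = (((p - 3*q)^2 - 8*q^2 : ℤ) : ℝ))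
    refine ⟨y, ?_, hy2⟩
    rcases eq_or_lt_of_le hynn with h0 | h0
    · exfalso; apply hσne; rw [← hy2, ← h0]; ring
    · exact h0
  · rintro ⟨k, hk1, hk2⟩
    have hkS : S = (k : ℝ) := by
      rw [hS]
      have : (((p - 3 * q) ^ 2 - 8 * q ^ 2 : ℤ) : ℝ) = ((k:ℝ))^2 := by
        rw [← hk2]; push_cast; ring
      rw [this, Real.sqrt_sq (by exact_mod_cast (by linarith : (0:ℤ) ≤ k) : (0:ℝ) ≤ (k:ℝ))]
    rcases hdisj with h | h
    · refine ⟨(3*p*q + ((p:ℚ)+q)*k) / ((p:ℚ)^2+q^2+3*p*q), ?_⟩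
      rw [h, hkS]; push_cast; ring
    · refine ⟨(3*p*q - ((p:ℚ)+q)*k) / ((p:ℚ)^2+q^2+3*p*q), ?_⟩
      rw [h, hkS]; push_cast; ring
end

section
/- For b ∈ [0,1), let acc(b) be the root z > 1 of z² − ((3−b)²/(1−b²) − 2)z + 1 = 0. Then (1 + acc(b))/(3−b) = sqrt(acc(b)/(1−b²)); i.e., the line z ↦ (1+z)/(3−b) passes through the point (acc(b), V_b(acc(b))) where V_b(z) = sqrt(z/(1−b²)). -/
theorem line_through_accumulation_point (b z : ℝ) (hb0 : 0 ≤ b) (hb1 : b < 1)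
    (hz : 1 < z)
    (hacc : z ^ 2 - ((3 - b) ^ 2 / (1 - b ^ 2) - 2) * z + 1 = 0) :
    (1 + z) / (3 - b) = Real.sqrt (z / (1 - b ^ 2)) := by
  have hb2 : (0:ℝ) < 1 - b ^ 2 := by nlinarith
  have h3b : (0:ℝ) < 3 - b := by linarith
  have key : z / (1 - b ^ 2) = ((1 + z) / (3 - b)) ^ 2 := by
    field_simp
    field_simp at hacc
    nlinarith [hacc]
  rw [key, Real.sqrt_sq (by positivity)]
end
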